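/- arXiv:2409.06636 — 4 statements merged into one kernel-verified Lean document; each statement's English description precedes it below -/
import Mathlib

section
/- Let s ≥ 1 and ε ≥ 0 be real numbers, and let T, T_B, T_N, E_B be real numbers such that T = s·T_B − (s−1)·T_N, |T| ≤ 1, |T_B| ≤ 1, |T_N| ≤ 1, |E_B − s·T_B| ≤ ε, and E_B ≥ ε + s − 2. Then |T − (E_B − ε − s + 2)/2| ≤ (ε + s − E_B)/2. (In this case EMRE outputs the estimate (E_B − ε − s + 2)/2 with bias at most (ε + s − E_B)/2.) -/
/-- EMRE non-trivial case I: when `E_B ≥ ε + s - 2`, EMRE outputs the estimate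
`(E_B - ε - s + 2)/2` with bias at most `(ε + s - E_B)/2`. -/
theorem emre_nontrivial_case_I (s ε T TB TN EB : ℝ)
    (hs : 1 ≤ s) (hε : 0 ≤ ε)
    (hT : T = s * TB - (s - 1) * TN)
    (hTabs : |T| ≤ 1) (hTBabs : |TB| ≤ 1) (hTNabs : |TN| ≤ 1)
    (hEB : |EB - s * TB| ≤ ε)
    (hcase : EB ≥ ε + s - 2) :
    |T - (EB - ε - s + 2) / 2| ≤ (ε + s - EB) / 2 := by
  rw [abs_le] at *
  constructor <;> nlinarith [hTabs.1, hTabs.2, hTBabs.1, hTBabs.2, hTNabs.1, hTNabs.2, hEB.1, hEB.2]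
end

section
/- Let s ≥ 1 and ε ≥ 0 be real numbers, and let T, T_B, T_N, E_B be real numbers such that T = s·T_B − (s−1)·T_N, |T| ≤ 1, |T_B| ≤ 1, |T_N| ≤ 1, |E_B − s·T_B| ≤ ε, and E_B ≤ 2 − ε − s. Then |T − (E_B + ε + s − 2)/2| ≤ (ε + s + E_B)/2. (In this case EMRE outputs the estimate (E_B + ε + s − 2)/2 with bias at most (ε + s + E_B)/2.) -/
/-- EMRE non-trivial case II: when `E_B ≤ 2 - ε - s`, EMRE outputs the estimate
`(E_B + ε + s - 2)/2` with bias at most `(ε + s + E_B)/2`. -/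
theorem emre_nontrivial_case_II (s ε T TB TN EB : ℝ)
    (hs : 1 ≤ s) (hε : 0 ≤ ε)
    (hT : T = s * TB - (s - 1) * TN)
    (hTabs : |T| ≤ 1) (hTBabs : |TB| ≤ 1) (hTNabs : |TN| ≤ 1)
    (hEB : |EB - s * TB| ≤ ε)
    (hcase : EB ≤ 2 - ε - s) :
    |T - (EB + ε + s - 2) / 2| ≤ (ε + s + EB) / 2 := by
  rw [abs_le] at *
  constructor <;> nlinarith [hTabs.1, hTabs.2, hTNabs.1, hTNabs.2, hEB.1, hEB.2]
end

section
/- Let 0 ≤ p ≤ 1 and let X, Y, Z denote the 2×2 Pauli matrices. Then for every 2×2 complex matrix ρ, ρ = (4/(4−3p))·[(1 − 3p/4)·ρ + (p/4)·(XρX + YρY + ZρZ)] − (3p/(4−3p))·[(1/3)·(XρX + YρY + ZρZ)]. Moreover, the map ρ ↦ (1/3)·(XρX + YρY + ZρZ) is a quantum channel, with Kraus operators X/√3, Y/√3, Z/√3. (This expresses the identity channel as (4/(4−3p))·E^depol − (3p/(4−3p))·N, where E^depol is the single-qubit partially depolarizing channel, and is the key decomposition step of Theorem 2.) -/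
open Matrix Complex

/-- The Pauli X matrix. -/
def PauliX : Matrix (Fin 2) (Fin 2) ℂ := !![0, 1; 1, 0]

/-- The Pauli Y matrix. -/
def PauliY : Matrix (Fin 2) (Fin 2) ℂ := !![0, -Complex.I; Complex.I, 0]

/-- The Pauli Z matrix. -/
def PauliZ : Matrix (Fin 2) (Fin 2) ℂ := !![1, 0; 0, -1]

/-- Key decomposition of Theorem 2 (single qubit): the identity channel equals
`(4/(4−3p))·E^depol − (3p/(4−3p))·N`, where `E^depol` is the single-qubit partially
depolarizing channel and `N(ρ) = (1/3)(XρX + YρY + ZρZ)`. Moreover `N` is a quantum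
channel with Kraus operators `X/√3, Y/√3, Z/√3`. -/
theorem identity_decomposition_depolarizing (p : ℝ) (hp0 : 0 ≤ p) (hp1 : p ≤ 1) :
    (∀ ρ : Matrix (Fin 2) (Fin 2) ℂ,
      ρ = ((4 / (4 - 3 * p) : ℝ) : ℂ) •
            (((1 - 3 * p / 4 : ℝ) : ℂ) • ρ +
              ((p / 4 : ℝ) : ℂ) •
                (PauliX * ρ * PauliX + PauliY * ρ * PauliY + PauliZ * ρ * PauliZ))
          - ((3 * p / (4 - 3 * p) : ℝ) : ℂ) •
            (((1 : ℂ) / 3) •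
              (PauliX * ρ * PauliX + PauliY * ρ * PauliY + PauliZ * ρ * PauliZ))) ∧
    (∀ K : Fin 3 → Matrix (Fin 2) (Fin 2) ℂ,
      K = ![((Real.sqrt 3 : ℂ))⁻¹ • PauliX, ((Real.sqrt 3 : ℂ))⁻¹ • PauliY,
            ((Real.sqrt 3 : ℂ))⁻¹ • PauliZ] →
      (∑ i, (K i)ᴴ * K i) = 1 ∧
      ∀ ρ : Matrix (Fin 2) (Fin 2) ℂ,
        ((1 : ℂ) / 3) • (PauliX * ρ * PauliX + PauliY * ρ * PauliY + PauliZ * ρ * PauliZ)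
          = ∑ i, K i * ρ * (K i)ᴴ) := by
  have hden : ((4 : ℝ) - 3 * p) ≠ 0 := by nlinarith
  have hdenC : ((4 : ℂ) - 3 * p) ≠ 0 := by
    intro h
    apply hden
    exact_mod_cast h
  have h3 : ((Real.sqrt 3 : ℂ)) * ((Real.sqrt 3 : ℂ)) = 3 := by
    rw [← Complex.ofReal_mul, Real.mul_self_sqrt (by norm_num)]
    norm_num
  have h3ne : ((Real.sqrt 3 : ℂ)) ≠ 0 := by
    intro h; rw [h] at h3; simp at h3
  constructor
  · intro ρ
    have hA : ((4 / (4 - 3 * p) : ℝ) : ℂ) * ((1 - 3 * p / 4 : ℝ) : ℂ) = 1 := by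
      push_cast
      field_simp
    have hB : ((4 / (4 - 3 * p) : ℝ) : ℂ) * ((p / 4 : ℝ) : ℂ)
        = ((3 * p / (4 - 3 * p) : ℝ) : ℂ) * ((1 : ℂ) / 3) := by
      push_cast
      field_simp
    rw [smul_add, smul_smul, smul_smul, smul_smul, hA, hB, one_smul, add_sub_cancel_right]
  · intro K hK
    subst hK
    have hXc : PauliXᴴ = PauliX := by
      ext i j; fin_cases i <;> fin_cases j <;> simp [PauliX, Matrix.conjTranspose_apply]
    have hYc : PauliYᴴ = PauliY := by
      ext i j; fin_cases i <;> fin_cases j <;> simp [PauliY, Matrix.conjTranspose_apply]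
    have hZc : PauliZᴴ = PauliZ := by
      ext i j; fin_cases i <;> fin_cases j <;> simp [PauliZ, Matrix.conjTranspose_apply]
    have hX2 : PauliX * PauliX = 1 := by
      ext i j; fin_cases i <;> fin_cases j <;>
        simp [PauliX, Matrix.mul_apply, Fin.sum_univ_two, Matrix.one_apply]
    have hY2 : PauliY * PauliY = 1 := by
      ext i j; fin_cases i <;> fin_cases j <;>
        simp [PauliY, Matrix.mul_apply, Fin.sum_univ_two, Matrix.one_apply]
    have hZ2 : PauliZ * PauliZ = 1 := by
      ext i j; fin_cases i <;> fin_cases j <;>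
        simp [PauliZ, Matrix.mul_apply, Fin.sum_univ_two, Matrix.one_apply]
    have hinv : (star (((Real.sqrt 3 : ℂ))⁻¹)) = ((Real.sqrt 3 : ℂ))⁻¹ := by
      rw [← Complex.ofReal_inv] at *
      exact Complex.conj_ofReal _
    have hthird : ((Real.sqrt 3 : ℂ))⁻¹ * ((Real.sqrt 3 : ℂ))⁻¹ = (1 : ℂ) / 3 := by
      rw [← mul_inv, h3]
      norm_num
    constructor
    · simp only [Fin.sum_univ_three, Matrix.cons_val_zero, Matrix.cons_val_one, Matrix.head_cons, Matrix.cons_val_two, Matrix.tail_cons, Matrix.conjTranspose_smul, hXc, hYc, hZc, hinv,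
        Matrix.smul_mul, Matrix.mul_smul, smul_smul, hthird, hX2, hY2, hZ2]
      ext i j
      fin_cases i <;> fin_cases j <;>
        simp [Matrix.one_apply, Matrix.add_apply, Matrix.smul_apply] <;> norm_num
    · intro ρ
      simp only [Fin.sum_univ_three, Matrix.cons_val_zero, Matrix.cons_val_one, Matrix.head_cons, Matrix.cons_val_two, Matrix.tail_cons, Matrix.conjTranspose_smul, hXc, hYc, hZc, hinv,
        Matrix.smul_mul, Matrix.mul_smul, smul_smul, hthird]
      rw [smul_add, smul_add]
end

section
/- Let n ≥ 1, let 0 ≤ p < 1, and consider matrices indexed by (Fin n → Fin 2), i.e., operators on n qubits. Let E = (E^depol)^{⊗n} be the n-fold tensor power of the single-qubit partially depolarizing channel, namely the channel with Kraus operators K_f (for f : Fin n → Fin 4) given entrywise by K_f(v,w) = ∏_i √(c_{f(i)})·σ_{f(i)}(v(i), w(i)), where σ_0 = I, σ_1 = X, σ_2 = Y, σ_3 = Z, c_0 = 1 − 3p/4, and c_1 = c_2 = c_3 = p/4. Then for every 2ⁿ×2ⁿ unitary U there exists a quantum channel M such that for all ρ, UρU† = (4/(4−3p))ⁿ · E(UρU†)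 − ((4/(4−3p))ⁿ − 1) · M(ρ). (This is the n-qubit upper bound of Theorem 2: under local partially depolarizing noise acting on each qubit after the gate, the generalized robustness of any n-qubit unitary satisfies R⁺_depol(U) ≤ (4/(4−3p))ⁿ − 1.) -/
open Matrix

/-- A quantum channel (CPTP map) on matrices indexed by a finite type `ι`: a map
admitting a finite family of Kraus operators `K i` with `∑ Kᴴ K = 1`. -/
def IsQuantumChannel {ι : Type*} [Fintype ι] [DecidableEq ι]
    (F : Matrix ι ι ℂ → Matrix ι ι ℂ) : Prop :=
  ∃ (k : ℕ) (K : Fin k → Matrix ι ι ℂ),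
    (∑ i, (K i)ᴴ * K i) = 1 ∧ ∀ ρ, F ρ = ∑ i, K i * ρ * (K i)ᴴ

/-- The single-qubit matrices `σ_0 = I, σ_1 = X, σ_2 = Y, σ_3 = Z`. -/
noncomputable def pauliσ : Fin 4 → Matrix (Fin 2) (Fin 2) ℂ :=
  ![1, !![0, 1; 1, 0], !![0, -Complex.I; Complex.I, 0], !![1, 0; 0, -1]]

/-- The depolarizing weights `c_0 = 1 − 3p/4`, `c_1 = c_2 = c_3 = p/4`. -/
noncomputable def depolC (p : ℝ) : Fin 4 → ℝ :=
  ![1 - 3 * p / 4, p / 4, p / 4, p / 4]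

/-- The Kraus operators `K_f` of the `n`-fold tensor power of the single-qubit
partially depolarizing channel: `K_f(v,w) = ∏ᵢ √(c_{f(i)})·σ_{f(i)}(v(i), w(i))`. -/
noncomputable def depolKraus (n : ℕ) (p : ℝ) (f : Fin n → Fin 4) :
    Matrix (Fin n → Fin 2) (Fin n → Fin 2) ℂ :=
  fun v w => ∏ i, ((Real.sqrt (depolC p (f i)) : ℂ) * pauliσ (f i) (v i) (w i))

/- auxiliary tensor-product machinery -/

noncomputable def tens {n : ℕ} (A : Fin n → Matrix (Fin 2) (Fin 2) ℂ) :
    Matrix (Fin n → Fin 2) (Fin n → Fin 2) ℂ :=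
  Matrix.of fun v w => ∏ i, A i (v i) (w i)

lemma tens_mul {n : ℕ} (A B : Fin n → Matrix (Fin 2) (Fin 2) ℂ) :
    tens A * tens B = tens (fun i => A i * B i) := by
  ext v w
  simp only [tens, Matrix.mul_apply, Matrix.of_apply, Fintype.prod_sum, ← Finset.prod_mul_distrib]

lemma tens_conjTranspose {n : ℕ} (A : Fin n → Matrix (Fin 2) (Fin 2) ℂ) :
    (tens A)ᴴ = tens (fun i => (A i)ᴴ) := by
  ext v w
  simp [tens, Matrix.conjTranspose_apply, star_prod]

lemma tens_one {n : ℕ} : tens (fun _ : Fin n => (1 : Matrix (Fin 2) (Fin 2) ℂ)) = 1 := by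
  ext v w
  simp only [tens, Matrix.of_apply, Matrix.one_apply, Finset.prod_boole]
  simp [funext_iff]

lemma tens_smul {n : ℕ} (c : Fin n → ℂ) (A : Fin n → Matrix (Fin 2) (Fin 2) ℂ) :
    tens (fun i => c i • A i) = (∏ i, c i) • tens A := by
  ext v w
  simp [tens, Finset.prod_mul_distrib]

lemma pauli_unitary (j : Fin 4) : (pauliσ j)ᴴ * pauliσ j = 1 := by
  fin_cases j <;>
  · ext a b
    fin_cases a <;> fin_cases b <;>
      simp [pauliσ, Matrix.mul_apply, Fin.sum_univ_two, Matrix.conjTranspose_apply,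
        Matrix.one_apply, Complex.ext_iff]

lemma depolKraus_eq_tens (n : ℕ) (p : ℝ) (f : Fin n → Fin 4) :
    depolKraus n p f
      = tens (fun i => ((Real.sqrt (depolC p (f i)) : ℝ) : ℂ) • pauliσ (f i)) := by
  ext v w
  simp [depolKraus, tens, Matrix.smul_apply, smul_eq_mul]

lemma depolC_nonneg (p : ℝ) (hp0 : 0 ≤ p) (hp1 : p ≤ 1) (j : Fin 4) : 0 ≤ depolC p j := by
  fin_cases j <;> simp [depolC] <;> linarith

lemma depolKraus_conjT_mul (n : ℕ) (p : ℝ) (hp0 : 0 ≤ p) (hp1 : p ≤ 1) (f : Fin n → Fin 4) :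
    (depolKraus n p f)ᴴ * depolKraus n p f
      = ((∏ i, depolC p (f i) : ℝ) : ℂ) • 1 := by
  rw [depolKraus_eq_tens, tens_conjTranspose, tens_mul]
  have h1 : (fun i => ((((Real.sqrt (depolC p (f i)) : ℝ) : ℂ) • pauliσ (f i))ᴴ
      * (((Real.sqrt (depolC p (f i)) : ℝ) : ℂ) • pauliσ (f i))))
      = fun i => ((depolC p (f i) : ℝ) : ℂ) • (1 : Matrix (Fin 2) (Fin 2) ℂ) := by
    funext i
    rw [Matrix.conjTranspose_smul, smul_mul_assoc, mul_smul_comm, smul_smul,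
      pauli_unitary]
    congr 1
    rw [Complex.star_def, Complex.conj_ofReal, ← Complex.ofReal_mul,
      Real.mul_self_sqrt (depolC_nonneg p hp0 hp1 (f i))]
  rw [h1, tens_smul, tens_one]
  push_cast
  rfl

lemma sum_depolC (p : ℝ) : ∑ j, depolC p j = 1 := by
  simp [depolC, Fin.sum_univ_four]; ring

lemma sum_prod_depolC (n : ℕ) (p : ℝ) :
    ∑ f : Fin n → Fin 4, ∏ i, depolC p (f i) = 1 := by
  rw [← Fintype.prod_sum]
  simp [sum_depolC]

/-- Theorem 2 (n-qubit upper bound): under local partially depolarizing noise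
`E = (E^depol)^{⊗n}` acting after the gate, every `n`-qubit unitary `U` admits a
decomposition `UρU† = (4/(4−3p))ⁿ·E(UρU†) − ((4/(4−3p))ⁿ − 1)·M(ρ)` with `M` a quantum
channel; hence `R⁺_depol(U) ≤ (4/(4−3p))ⁿ − 1`. -/
theorem n_qubit_depolarizing_robustness_upper_bound (n : ℕ) (hn : 1 ≤ n)
    (p : ℝ) (hp0 : 0 ≤ p) (hp1 : p < 1)
    (E : Matrix (Fin n → Fin 2) (Fin n → Fin 2) ℂ → Matrix (Fin n → Fin 2) (Fin n → Fin 2) ℂ)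
    (hE : ∀ ρ, E ρ = ∑ f : Fin n → Fin 4, depolKraus n p f * ρ * (depolKraus n p f)ᴴ)
    (U : Matrix (Fin n → Fin 2) (Fin n → Fin 2) ℂ)
    (hU : U ∈ Matrix.unitaryGroup (Fin n → Fin 2) ℂ) :
    ∃ M : Matrix (Fin n → Fin 2) (Fin n → Fin 2) ℂ → Matrix (Fin n → Fin 2) (Fin n → Fin 2) ℂ,
      IsQuantumChannel M ∧
      ∀ ρ, U * ρ * Uᴴ =
        (((4 / (4 - 3 * p)) ^ n : ℝ) : ℂ) • E (U * ρ * Uᴴ)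
          - ((((4 / (4 - 3 * p)) ^ n - 1 : ℝ)) : ℂ) • M ρ := by
  classical
  set z : Fin n → Fin 4 := fun _ => 0 with hz
  by_cases hp : p = 0
  · -- noiseless case : E is the identity channel
    subst hp
    refine ⟨id, ⟨1, fun _ => 1, by simp, by simp⟩, ?_⟩
    intro ρ
    have h1 : ((4 : ℝ) / (4 - 3 * 0)) ^ n = 1 := by norm_num
    rw [hE, h1]
    simp only [Complex.ofReal_one, one_smul, sub_self, Complex.ofReal_zero, zero_smul, sub_zero]
    rw [Finset.sum_eq_single z]
    · have hK0 : depolKraus n 0 z = 1 := by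
        rw [depolKraus_eq_tens]
        have : (fun i : Fin n => ((Real.sqrt (depolC 0 (z i)) : ℝ) : ℂ) • pauliσ (z i))
            = fun _ : Fin n => (1 : Matrix (Fin 2) (Fin 2) ℂ) := by
          funext i
          simp [hz, depolC, pauliσ]
        rw [this, tens_one]
      rw [hK0]
      simp
    · intro f _ hf
      have hKb : depolKraus n 0 f = 0 := by
        have hb : ∃ i, f i ≠ 0 := by
          by_contra h
          push_neg at h
          exact hf (funext h)
        obtain ⟨i, hi⟩ := hb
        ext v w
        apply Finset.prod_eq_zero (Finset.mem_univ i)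
        have hc : depolC 0 (f i) = 0 := by
          generalize hbi : f i = j at hi ⊢
          fin_cases j <;> simp [depolC] at hi ⊢
        rw [hc]
        simp
      rw [hKb]
      simp
    · intro h
      exact absurd (Finset.mem_univ z) h
  · -- noisy case
    have hp' : 0 < p := lt_of_le_of_ne hp0 (Ne.symm hp)
    set q : ℝ := 1 - 3 * p / 4 with hqdef
    have hq0 : (0 : ℝ) < q := by rw [hqdef]; linarith
    have hq1 : q < 1 := by rw [hqdef]; linarith
    have hqn0 : (0 : ℝ) < q ^ n := pow_pos hq0 n
    have hqn1 : q ^ n < 1 := pow_lt_one₀ hq0.le hq1 (by omega)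
    have h1qn : (0 : ℝ) < 1 - q ^ n := by linarith
    have hs : ((4 : ℝ) / (4 - 3 * p)) ^ n = (q ^ n)⁻¹ := by
      rw [← inv_pow]
      congr 1
      rw [hqdef, eq_comm, inv_eq_iff_eq_inv, eq_comm, inv_div,
        div_eq_iff (by norm_num : (4:ℝ) ≠ 0)]
      ring
    set t : ℝ := Real.sqrt (1 - q ^ n)⁻¹ with htdef
    have htt : t * t = (1 - q ^ n)⁻¹ := Real.mul_self_sqrt (by positivity)
    have hUU : Uᴴ * U = 1 := by
      have := hU.1
      rwa [Matrix.star_eq_conjTranspose] at this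
    have hprod0 : ∏ i : Fin n, depolC p (z i) = q ^ n := by
      simp [hz, depolC, hqdef]
    have herase : ∑ f ∈ Finset.univ.erase z, ∏ i, depolC p (f i) = 1 - q ^ n := by
      have h := sum_prod_depolC n p
      rw [← Finset.sum_erase_add _ _ (Finset.mem_univ z), hprod0] at h
      linarith
    set L : (Fin n → Fin 4) → Matrix (Fin n → Fin 2) (Fin n → Fin 2) ℂ :=
      fun f => if f = z then 0 else (t : ℂ) • (depolKraus n p f * U) with hLdef
    have hLz : L z = 0 := by rw [hLdef]; simp
    have hLterm : ∀ f, f ≠ z →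
        (L f)ᴴ * L f = ((t * t * ∏ i, depolC p (f i) : ℝ) : ℂ) • 1 := by
      intro f hf
      rw [hLdef]
      simp only [if_neg hf]
      rw [Matrix.conjTranspose_smul, Matrix.conjTranspose_mul, Complex.star_def,
        Complex.conj_ofReal, smul_mul_assoc, mul_smul_comm, smul_smul]
      have hm : Uᴴ * (depolKraus n p f)ᴴ * (depolKraus n p f * U)
          = ((∏ i, depolC p (f i) : ℝ) : ℂ) • 1 := by
        rw [mul_assoc, ← mul_assoc (depolKraus n p f)ᴴ,
          depolKraus_conjT_mul n p hp0 hp1.le f, smul_mul_assoc, one_mul, mul_smul_comm, hUU]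
      rw [hm, smul_smul, ← Complex.ofReal_mul, ← Complex.ofReal_mul]
    refine ⟨fun ρ => ∑ f, L f * ρ * (L f)ᴴ, ?_, ?_⟩
    · -- M is a quantum channel
      obtain ⟨e⟩ : Nonempty ((Fin n → Fin 4) ≃ Fin (Fintype.card (Fin n → Fin 4))) :=
        ⟨Fintype.equivFin _⟩
      refine ⟨Fintype.card (Fin n → Fin 4), fun i => L (e.symm i), ?_, fun ρ => ?_⟩
      · rw [Equiv.sum_comp e.symm (fun f => (L f)ᴴ * L f)]
        rw [← Finset.sum_erase_add _ _ (Finset.mem_univ z), hLz]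
        simp only [Matrix.conjTranspose_zero, mul_zero, add_zero]
        rw [Finset.sum_congr rfl (fun f hf => hLterm f (Finset.ne_of_mem_erase hf)),
          ← Finset.sum_smul, ← Complex.ofReal_sum, ← Finset.mul_sum, herase, htt,
          inv_mul_cancel₀ h1qn.ne']
        simp
      · exact (Equiv.sum_comp e.symm (fun f => L f * ρ * (L f)ᴴ)).symm
    · -- the decomposition identity
      intro ρ
      rw [hE]
      beta_reduce
      have hMρ : ∑ f, L f * ρ * (L f)ᴴ
          = ((t * t : ℝ) : ℂ) • ∑ f ∈ Finset.univ.erase z,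
              depolKraus n p f * (U * ρ * Uᴴ) * (depolKraus n p f)ᴴ := by
        rw [← Finset.sum_erase_add _ _ (Finset.mem_univ z), hLz]
        simp only [Matrix.zero_mul, Matrix.mul_zero, add_zero, Matrix.conjTranspose_zero]
        rw [Finset.smul_sum]
        refine Finset.sum_congr rfl fun f hf => ?_
        have hfz := Finset.ne_of_mem_erase hf
        rw [hLdef]
        simp only [if_neg hfz]
        rw [Matrix.conjTranspose_smul, Matrix.conjTranspose_mul, Complex.star_def,
          Complex.conj_ofReal, smul_mul_assoc, smul_mul_assoc, mul_smul_comm, smul_smul,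
          ← Complex.ofReal_mul]
        congr 1
        simp only [Matrix.mul_assoc]
      have hK0 : depolKraus n p z = ((Real.sqrt q ^ n : ℝ) : ℂ) • 1 := by
        rw [depolKraus_eq_tens]
        have h2 : (fun i : Fin n => ((Real.sqrt (depolC p (z i)) : ℝ) : ℂ) • pauliσ (z i))
            = fun _ : Fin n => ((Real.sqrt q : ℝ) : ℂ) • (1 : Matrix (Fin 2) (Fin 2) ℂ) := by
          funext i
          simp [hz, depolC, pauliσ, hqdef]
        rw [h2, tens_smul, tens_one]
        simp
      have hEsum : ∑ f : Fin n → Fin 4, depolKraus n p f * (U * ρ * Uᴴ) * (depolKraus n p f)ᴴ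
          = (∑ f ∈ Finset.univ.erase z,
              depolKraus n p f * (U * ρ * Uᴴ) * (depolKraus n p f)ᴴ)
            + ((q ^ n : ℝ) : ℂ) • (U * ρ * Uᴴ) := by
        rw [← Finset.sum_erase_add _ _ (Finset.mem_univ z)]
        congr 1
        rw [hK0, Matrix.conjTranspose_smul, Matrix.conjTranspose_one, Complex.star_def,
          Complex.conj_ofReal, smul_mul_assoc, one_mul, mul_smul_comm, mul_one, smul_smul,
          ← Complex.ofReal_mul, ← mul_pow, Real.mul_self_sqrt hq0.le]
      rw [hMρ, hEsum, hs]
      rw [smul_add, smul_smul, smul_smul, ← Complex.ofReal_mul, ← Complex.ofReal_mul]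
      have e1 : (q ^ n)⁻¹ * q ^ n = 1 := inv_mul_cancel₀ hqn0.ne'
      have e2 : ((q ^ n)⁻¹ - 1) * (t * t) = (q ^ n)⁻¹ := by
        rw [htt]
        field_simp
      rw [e1, e2]
      simp
end
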